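/- arXiv:2511.20638 — 2 statements merged into one kernel-verified Lean document; each statement's English description precedes it below -/
import Mathlib

section
/- Let X be a first-countable topological space written as a disjoint union X = X₁ ∪ X₂. Assume that for every convergent sequence (xⱼ) contained in X₁, the set of limit points of (xⱼ) intersected with X₂ has no isolated points. Then for every subset S of X that is locally closed (an intersection of an open and a closed set) and Hausdorff in the subspace topology, the set S ∩ X₁ is relatively closed in S. -/
/-!
If a point `s ∈ S ∩ X₂` were a limit of a sequence in `S ∩ X₁`, the hypothesis would give cluster
points `y ≠ s` of that sequence in `X₂` arbitrarily close to `s`. Writing `S = U ∩ F`, such a `y`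
taken inside `U` lies in `F` because `F` is closed, hence in `S`; but in the Hausdorff space `S`
a convergent sequence has its limit as its only cluster point.
-/

open Filter Topology Set

theorem IsLocallyClosed.eventually_mapClusterPt_imp_eq {X α : Type*} [TopologicalSpace X]
    {S : Set X} (hS : IsLocallyClosed S) [T2Space S] {l : Filter α} {u : α → S} {s : S}
    (hu : Tendsto u l (𝓝 s)) :
    ∀ᶠ y in 𝓝 (s : X), MapClusterPt y l (fun a => (u a : X)) → y = s := by
  obtain ⟨U, F, hU, hF, rfl⟩ := hS
  filter_upwards [hU.mem_nhds s.2.1] with y hyU hy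
  have hyF : y ∈ F := hF.mem_of_mapClusterPt hy (Eventually.of_forall fun a => (u a).2.2)
  have hy' : MapClusterPt (⟨y, hyU, hyF⟩ : ↥(U ∩ F)) l u :=
    IsInducing.subtypeVal.mapClusterPt_iff.mp hy
  exact congrArg Subtype.val (eq_of_nhds_neBot (hy'.clusterPt.mono hu))

theorem statement0_general {X : Type*} [TopologicalSpace X] [FirstCountableTopology X]
    (X₁ X₂ : Set X) (hunion : X₁ ∪ X₂ = Set.univ)
    (hcond : ∀ x : ℕ → X, (∀ j, x j ∈ X₁) →
      (∃ l, Filter.Tendsto x Filter.atTop (nhds l)) →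
      ∀ y ∈ {p | MapClusterPt p Filter.atTop x} ∩ X₂,
        y ∈ closure (({p | MapClusterPt p Filter.atTop x} ∩ X₂) \ {y}))
    (S : Set X) (hS : IsLocallyClosed S) (hHaus : T2Space S) :
    IsClosed {p : S | (p : X) ∈ X₁} := by
  refine isClosed_of_closure_subset fun s hs => ?_
  by_contra hs₁
  have hs₂ : (s : X) ∈ X₂ := (hunion.ge (mem_univ (s : X))).resolve_left hs₁
  obtain ⟨u, hu₁, hu⟩ := mem_closure_iff_seq_limit.mp hs
  have hu' : Tendsto (fun j => (u j : X)) atTop (𝓝 (s : X)) :=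
    (continuous_subtype_val.tendsto s).comp hu
  have hs_acc := hcond _ hu₁ ⟨_, hu'⟩ s ⟨hu'.mapClusterPt, hs₂⟩
  obtain ⟨y, ⟨⟨hy, -⟩, hys⟩, hy_eq⟩ := ((mem_closure_iff_frequently.mp hs_acc).and_eventually
    (hS.eventually_mapClusterPt_imp_eq hu)).exists
  exact hys (hy_eq hy)

/-- If `X = X₁ ⊔ X₂` is first countable and for every convergent sequence
contained in `X₁` the set of its cluster points lying in `X₂` has no isolated points,
then for every locally closed subset `S` of `X` that is Hausdorff in the subspace
topology, `S ∩ X₁` is relatively closed in `S`. -/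
theorem statement0 {X : Type*} [TopologicalSpace X] [FirstCountableTopology X]
    (X₁ X₂ : Set X) (hdisj : Disjoint X₁ X₂) (hunion : X₁ ∪ X₂ = Set.univ)
    (hcond : ∀ x : ℕ → X, (∀ j, x j ∈ X₁) →
      (∃ l, Filter.Tendsto x Filter.atTop (nhds l)) →
      ∀ y ∈ {p | MapClusterPt p Filter.atTop x} ∩ X₂,
        y ∈ closure (({p | MapClusterPt p Filter.atTop x} ∩ X₂) \ {y}))
    (S : Set X) (hS : IsLocallyClosed S) (hHaus : T2Space S) :
    IsClosed {p : S | (p : X) ∈ X₁} :=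
  statement0_general X₁ X₂ hunion hcond S hS hHaus
end

section
/- Let g be a finite-dimensional real Lie algebra possessing an abelian ideal a of codimension 1. Then every coadjoint orbit of g has dimension at most 2; equivalently, for every ξ ∈ g*, the stabilizer subalgebra g(ξ) = {x ∈ g : ξ([x, g]) = 0} has codimension at most 2 in g. -/
/-- The stabilizer (radical of the bilinear form `(x,y) ↦ ξ ⁅x,y⁆`) of `ξ ∈ g*`. -/
def coadjointStabilizer {L : Type*} [LieRing L] [LieAlgebra ℝ L]
    (ξ : Module.Dual ℝ L) : Submodule ℝ L where
  carrier := {x : L | ∀ y : L, ξ ⁅x, y⁆ = 0}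
  add_mem' := by
    intro a b ha hb y
    rw [add_lie, map_add, ha y, hb y, add_zero]
  zero_mem' := by
    intro y
    rw [zero_lie, map_zero]
  smul_mem' := by
    intro c a ha y
    rw [smul_lie, map_smul, ha y, smul_zero]

/-!
Let `a` be an abelian subspace of codimension one, so `g = a ⊕ ℝ e`. For `x ∈ a` the
functional `ξ ⁅x, ·⁆` vanishes on `a`, hence `x ∈ g(ξ)` as soon as `ξ ⁅e, x⁆ = 0`. Thus `g(ξ)`
contains the kernel of a linear functional on `a`, which has codimension at most two in `g`.
-/

open Module

section FiniteDimensional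

variable {K V : Type*} [Field K] [AddCommGroup V] [Module K V] [FiniteDimensional K V]

theorem Module.Dual.finrank_le_finrank_ker_add_one (f : Dual K V) :
    finrank K V ≤ finrank K (LinearMap.ker f) + 1 := by
  have hrange : finrank K (LinearMap.range f) ≤ 1 := by
    simpa using (LinearMap.range f).finrank_le
  have := f.finrank_range_add_finrank_ker
  omega

namespace Submodule

theorem finrank_le_finrank_inf_ker_add_one (p : Submodule K V) (f : Dual K V) :
    finrank K p ≤ finrank K ↥(p ⊓ LinearMap.ker f) + 1 := by
  have hsup := finrank_sup_add_finrank_inf_eq p (LinearMap.ker f)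
  have hle := (p ⊔ LinearMap.ker f).finrank_le
  have hker := f.finrank_le_finrank_ker_add_one
  omega

theorem exists_sup_span_singleton_eq_top (p : Submodule K V)
    (hp : finrank K p + 1 = finrank K V) : ∃ v : V, p ⊔ K ∙ v = ⊤ := by
  have hne : p ≠ ⊤ := by
    rintro rfl
    rw [finrank_top] at hp
    omega
  obtain ⟨v, -, hv⟩ := SetLike.exists_of_lt (lt_top_iff_ne_top.2 hne)
  exact ⟨v, eq_top_of_finrank_eq (by rw [finrank_sup_span_singleton hv, hp])⟩

end Submodule

end FiniteDimensional

theorem inf_ker_comp_ad_le_coadjointStabilizer {L : Type*} [LieRing L] [LieAlgebra ℝ L]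
    {A : Submodule ℝ L} (hA : ∀ x y : L, x ∈ A → y ∈ A → ⁅x, y⁆ = 0) {e : L}
    (he : A ⊔ ℝ ∙ e = ⊤) (ξ : Dual ℝ L) :
    A ⊓ LinearMap.ker (ξ ∘ₗ LieAlgebra.ad ℝ L e) ≤ coadjointStabilizer ξ := by
  rintro x ⟨hxA, hxker⟩ y
  obtain ⟨z, hz, w, hw, rfl⟩ := Submodule.mem_sup.1 (he ▸ Submodule.mem_top : y ∈ A ⊔ ℝ ∙ e)
  obtain ⟨c, rfl⟩ := Submodule.mem_span_singleton.1 hw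
  have hxe : ξ ⁅e, x⁆ = 0 := hxker
  rw [lie_add, hA x z hxA hz, zero_add, lie_smul, ← lie_skew, map_smul, map_neg, hxe, neg_zero,
    smul_zero]

/-- If a finite-dimensional real Lie algebra `g` has an abelian ideal of
codimension 1, then every coadjoint orbit has dimension at most 2; equivalently, for every
`ξ ∈ g*` the stabilizer `g(ξ) = {x | ξ([x,g]) = 0}` has codimension at most 2. -/
theorem statement7 {L : Type*} [LieRing L] [LieAlgebra ℝ L] [FiniteDimensional ℝ L]
    (a : LieIdeal ℝ L) (habelian : ∀ x y : L, x ∈ a → y ∈ a → ⁅x, y⁆ = 0)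
    (hcodim : Module.finrank ℝ a + 1 = Module.finrank ℝ L) :
    ∀ ξ : Module.Dual ℝ L,
      Module.finrank ℝ L ≤ Module.finrank ℝ (coadjointStabilizer ξ) + 2 := by
  intro ξ
  obtain ⟨e, he⟩ := a.toSubmodule.exists_sup_span_singleton_eq_top hcodim
  have hker : finrank ℝ a ≤ _ :=
    a.toSubmodule.finrank_le_finrank_inf_ker_add_one (ξ ∘ₗ LieAlgebra.ad ℝ L e)
  have hstab := Submodule.finrank_mono (inf_ker_comp_ad_le_coadjointStabilizer habelian he ξ)
  omega
end
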